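/- For 0 < α < 1 and λ > 0, the function Q(t) = E_α(-λ t^α) solves the fractional relaxation equation: for all t > 0, (1/Γ(1-α)) ∫_0^t (t-t')^{-α} Q'(t') dt' = -λ Q(t), with Q(0) = 1, where Q' denotes the derivative of Q (given by termwise differentiation of the Mittag-Leffler series). -/

import Mathlib

/-!
Differentiating termwise, the `n`-th term `c^n t^(αn) / Γ(αn+1)` of `E_α(c t^α)` has derivative
`c^n t^(αn-1) / Γ(αn)` for `n ≥ 1`, and the Beta integral
`∫₀ᵗ (t-x)^(-α) x^(αn-1) dx = t^(α(n-1)) Γ(αn) Γ(1-α) / Γ(α(n-1)+1)` turns its fractional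
integral into `c Γ(1-α)` times the `(n-1)`-st term. Both the termwise differentiation and the
exchange of sum and integral rest on the absolute convergence of `∑ rⁿ / Γ(αn+1)` for every `r`,
which is the ratio test: by log-convexity of `Γ`, `Γ(x+1) / Γ(x+1+α) ≤ (x+α)^(-α) → 0`.
-/

open Real Set Filter Topology MeasureTheory

namespace Real

theorem Gamma_add_one_le_Gamma_add_mul_rpow {α x : ℝ} (hα0 : 0 < α) (hα1 : α < 1) (hx : 0 < x) :
    Gamma (x + 1) ≤ Gamma (x + α) * (x + α) ^ (1 - α) := by
  have hxα : 0 < x + α := by linarith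
  have hconv := Gamma_mul_add_mul_le_rpow_Gamma_mul_rpow_Gamma hxα (by linarith : 0 < x + α + 1)
    hα0 (by linarith : 0 < 1 - α) (by ring)
  rw [Gamma_add_one hxα.ne', mul_rpow hxα.le (Gamma_pos_of_pos hxα).le] at hconv
  calc Gamma (x + 1) = Gamma (α * (x + α) + (1 - α) * (x + α + 1)) := by ring_nf
    _ ≤ _ := hconv
    _ = Gamma (x + α) * (x + α) ^ (1 - α) := by
      rw [mul_left_comm, ← rpow_add (Gamma_pos_of_pos hxα), add_sub_cancel, rpow_one,
        mul_comm]

theorem tendsto_Gamma_add_one_div_Gamma_add_one_add {α : ℝ} (hα0 : 0 < α) (hα1 : α < 1) :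
    Tendsto (fun x => Gamma (x + 1) / Gamma (x + 1 + α)) atTop (𝓝 0) := by
  have hbound : ∀ᶠ x in atTop, Gamma (x + 1) / Gamma (x + 1 + α) ≤ (x + α) ^ (-α) := by
    filter_upwards [eventually_gt_atTop 0] with x hx
    have hxα : 0 < x + α := by linarith
    rw [show x + 1 + α = x + α + 1 by ring, Gamma_add_one hxα.ne',
      div_le_iff₀ (mul_pos hxα (Gamma_pos_of_pos hxα))]
    calc Gamma (x + 1) ≤ Gamma (x + α) * (x + α) ^ (1 - α) :=
          Gamma_add_one_le_Gamma_add_mul_rpow hα0 hα1 hx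
      _ = (x + α) ^ (-α) * ((x + α) * Gamma (x + α)) := by
          rw [sub_eq_add_neg, rpow_add hxα, rpow_one]; ring
  have hpos : ∀ᶠ x in atTop, 0 ≤ Gamma (x + 1) / Gamma (x + 1 + α) := by
    filter_upwards [eventually_gt_atTop 0] with x hx
    exact div_nonneg (Gamma_pos_of_pos (by linarith)).le (Gamma_pos_of_pos (by linarith)).le
  exact tendsto_of_tendsto_of_tendsto_of_le_of_le' tendsto_const_nhds
    ((tendsto_rpow_neg_atTop hα0).comp (tendsto_atTop_add_const_right _ α tendsto_id)) hpos hbound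

theorem summable_pow_div_Gamma {α : ℝ} (hα0 : 0 < α) (hα1 : α < 1) (r : ℝ) :
    Summable fun n : ℕ => r ^ n / Gamma (α * n + 1) := by
  have hGpos : ∀ n : ℕ, 0 < Gamma (α * n + 1) := fun n => Gamma_pos_of_pos (by positivity)
  have hratio : Tendsto (fun n : ℕ => |r| * (Gamma (α * n + 1) / Gamma (α * n + 1 + α)))
      atTop (𝓝 0) := by
    simpa using ((tendsto_Gamma_add_one_div_Gamma_add_one_add hα0 hα1).comp
      (tendsto_natCast_atTop_atTop.const_mul_atTop hα0)).const_mul |r|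
  refine summable_of_ratio_norm_eventually_le (by norm_num : (1 / 2 : ℝ) < 1) ?_
  filter_upwards [hratio.eventually (ge_mem_nhds (by norm_num : (0 : ℝ) < 1 / 2))] with n hn
  have hsucc : α * ((n + 1 : ℕ) : ℝ) + 1 = α * n + 1 + α := by push_cast; ring
  rw [norm_div, norm_div, norm_pow, norm_pow, hsucc, norm_of_nonneg (hGpos n).le,
    norm_of_nonneg (Gamma_pos_of_pos (by positivity)).le, Real.norm_eq_abs, pow_succ]
  calc |r| ^ n * |r| / Gamma (α * n + 1 + α)
      = |r| * (Gamma (α * n + 1) / Gamma (α * n + 1 + α)) * (|r| ^ n / Gamma (α * n + 1)) := by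
        field_simp [(hGpos n).ne']
    _ ≤ 1 / 2 * (|r| ^ n / Gamma (α * n + 1)) := by gcongr

theorem integral_rpow_mul_one_sub_rpow {a b : ℝ} (ha : 0 < a) (hb : 0 < b) :
    ∫ x in (0 : ℝ)..1, x ^ (a - 1) * (1 - x) ^ (b - 1) = Gamma a * Gamma b / Gamma (a + b) := by
  have hcomplex := Complex.Gamma_mul_Gamma_eq_betaIntegral (s := a) (t := b)
    (by simpa using ha) (by simpa using hb)
  have hbeta : Complex.betaIntegral a b
      = ((∫ x in (0 : ℝ)..1, x ^ (a - 1) * (1 - x) ^ (b - 1) : ℝ) : ℂ) := by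
    rw [Complex.betaIntegral, ← intervalIntegral.integral_ofReal]
    refine intervalIntegral.integral_congr fun x hx => ?_
    rw [uIcc_of_le zero_le_one] at hx
    push_cast
    rw [Complex.ofReal_cpow hx.1, Complex.ofReal_cpow (sub_nonneg.2 hx.2)]
    push_cast
    ring
  rw [hbeta, ← Complex.ofReal_add, Complex.Gamma_ofReal, Complex.Gamma_ofReal,
    Complex.Gamma_ofReal, ← Complex.ofReal_mul, ← Complex.ofReal_mul] at hcomplex
  rw [Complex.ofReal_injective hcomplex,
    mul_div_cancel_left₀ _ (Gamma_pos_of_pos (by linarith)).ne']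

theorem integral_rpow_mul_sub_rpow {p q t : ℝ} (hp : 0 < p) (hq : 0 < q) (ht : 0 < t) :
    ∫ x in (0 : ℝ)..t, x ^ (p - 1) * (t - x) ^ (q - 1)
      = t ^ (p + q - 1) * (Gamma p * Gamma q / Gamma (p + q)) := by
  have hscale := intervalIntegral.mul_integral_comp_mul_left
    (a := 0) (b := 1) (c := t) (f := fun x => x ^ (p - 1) * (t - x) ^ (q - 1))
  rw [mul_zero, mul_one] at hscale
  rw [← hscale, ← integral_rpow_mul_one_sub_rpow hp hq, ← intervalIntegral.integral_const_mul,
    ← intervalIntegral.integral_const_mul]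
  refine intervalIntegral.integral_congr fun u hu => ?_
  rw [uIcc_of_le zero_le_one] at hu
  rw [show t - t * u = t * (1 - u) by ring, mul_rpow ht.le hu.1,
    mul_rpow ht.le (sub_nonneg.2 hu.2),
    show p + q - 1 = (p - 1) + (q - 1) + 1 by ring, rpow_add ht, rpow_add ht, rpow_one]
  ring

theorem intervalIntegrable_rpow_mul_sub_rpow {p q t : ℝ} (hp : 0 < p) (hq : 0 < q) (ht : 0 < t) :
    IntervalIntegrable (fun x => x ^ (p - 1) * (t - x) ^ (q - 1)) volume 0 t := by
  -- a non-integrable function would have integral `0`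
  refine intervalIntegral.intervalIntegrable_of_integral_ne_zero ?_
  rw [integral_rpow_mul_sub_rpow hp hq ht]
  have := add_pos hp hq
  positivity

end Real

noncomputable def mittagLefflerTerm (α c : ℝ) (n : ℕ) (t : ℝ) : ℝ :=
  c ^ n * t ^ (α * n) / Gamma (α * n + 1)

noncomputable def mittagLefflerTermDeriv (α c : ℝ) (n : ℕ) (t : ℝ) : ℝ :=
  c ^ n * (α * n) * t ^ (α * n - 1) / Gamma (α * n + 1)

section MittagLeffler

variable {α : ℝ} (c : ℝ)

theorem pow_div_Gamma_eq_mittagLefflerTerm (n : ℕ) {t : ℝ} (ht : 0 ≤ t) :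
    (c * t ^ α) ^ n / Gamma (α * n + 1) = mittagLefflerTerm α c n t := by
  rw [mittagLefflerTerm, mul_pow, ← rpow_natCast (t ^ α), ← rpow_mul ht]

theorem summable_mittagLefflerTerm (hα0 : 0 < α) (hα1 : α < 1) {t : ℝ} (ht : 0 ≤ t) :
    Summable fun n => mittagLefflerTerm α c n t := by
  simpa only [pow_div_Gamma_eq_mittagLefflerTerm c _ ht] using
    summable_pow_div_Gamma hα0 hα1 (c * t ^ α)

theorem hasDerivAt_mittagLefflerTerm (n : ℕ) {t : ℝ} (ht : 0 < t) :
    HasDerivAt (mittagLefflerTerm α c n) (mittagLefflerTermDeriv α c n t) t := by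
  have := ((hasDerivAt_rpow_const (p := α * n) (Or.inl ht.ne')).const_mul (c ^ n)).div_const
    (Gamma (α * n + 1))
  rw [mittagLefflerTermDeriv]
  exact this.congr_deriv (by ring)

@[simp]
theorem mittagLefflerTermDeriv_zero : mittagLefflerTermDeriv α c 0 = 0 := by
  funext t
  simp [mittagLefflerTermDeriv]

theorem mittagLefflerTermDeriv_succ (hα0 : 0 < α) (n : ℕ) (t : ℝ) :
    mittagLefflerTermDeriv α c (n + 1) t
      = c ^ (n + 1) / Gamma (α * (n + 1)) * t ^ (α * (n + 1) - 1) := by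
  have hpos : 0 < α * (n + 1) := by positivity
  rw [mittagLefflerTermDeriv, Nat.cast_succ, Gamma_add_one hpos.ne']
  field_simp

theorem abs_mittagLefflerTermDeriv (hα : 0 ≤ α) (n : ℕ) {t : ℝ} (ht : 0 ≤ t) :
    |mittagLefflerTermDeriv α c n t| = mittagLefflerTermDeriv α |c| n t := by
  have : 0 < Gamma (α * n + 1) := Gamma_pos_of_pos (by positivity)
  rw [mittagLefflerTermDeriv, mittagLefflerTermDeriv, abs_div, abs_mul, abs_mul, abs_pow,
    abs_of_nonneg (by positivity : 0 ≤ α * n), abs_of_nonneg (rpow_nonneg ht _), abs_of_pos this]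

theorem abs_mittagLefflerTermDeriv_le (hα : 0 ≤ α) (n : ℕ) {a b t : ℝ} (ha : 0 < a)
    (hat : a ≤ t) (htb : t ≤ b) :
    |mittagLefflerTermDeriv α c n t| ≤ α / a * ((2 * |c| * b ^ α) ^ n / Gamma (α * n + 1)) := by
  have ht : 0 < t := ha.trans_le hat
  have hG : 0 < Gamma (α * n + 1) := Gamma_pos_of_pos (by positivity)
  have hn : (n : ℝ) ≤ 2 ^ n := by exact_mod_cast (Nat.lt_two_pow_self).le
  have hpow : t ^ (α * n) ≤ (b ^ α) ^ n := by
    rw [← rpow_natCast, ← rpow_mul (ht.le.trans htb)]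
    exact rpow_le_rpow ht.le htb (by positivity)
  rw [abs_mittagLefflerTermDeriv c hα n ht.le, mittagLefflerTermDeriv, rpow_sub ht, rpow_one,
    mul_pow, mul_pow]
  calc |c| ^ n * (α * n) * (t ^ (α * n) / t) / Gamma (α * n + 1)
      = α / t * n * (|c| ^ n * t ^ (α * n)) / Gamma (α * n + 1) := by ring
    _ ≤ α / a * 2 ^ n * (|c| ^ n * (b ^ α) ^ n) / Gamma (α * n + 1) := by gcongr
    _ = _ := by ring

theorem hasDerivAt_tsum_mittagLefflerTerm (hα0 : 0 < α) (hα1 : α < 1) {t : ℝ} (ht : 0 < t) :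
    HasDerivAt (fun s => ∑' n, mittagLefflerTerm α c n s)
      (∑' n, mittagLefflerTermDeriv α c n t) t := by
  have ht' : t ∈ Ioo (t / 2) (t + 1) := ⟨by linarith, by linarith⟩
  refine hasDerivAt_tsum_of_isPreconnected
    ((summable_pow_div_Gamma hα0 hα1 (2 * |c| * (t + 1) ^ α)).mul_left (α / (t / 2)))
    isOpen_Ioo isPreconnected_Ioo (fun n s hs => ?_) (fun n s hs => ?_) ht'
    (summable_mittagLefflerTerm c hα0 hα1 ht.le) ht'
  · exact hasDerivAt_mittagLefflerTerm c n (by linarith [hs.1])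
  · exact abs_mittagLefflerTermDeriv_le c hα0.le n (by linarith) hs.1.le hs.2.le

theorem intervalIntegrable_rpow_neg_mul_mittagLefflerTermDeriv (hα0 : 0 < α) (hα1 : α < 1)
    (n : ℕ) {t : ℝ} (ht : 0 < t) :
    IntervalIntegrable (fun x => (t - x) ^ (-α) * mittagLefflerTermDeriv α c n x) volume 0 t := by
  cases n with
  | zero => simp
  | succ n =>
    have hbeta := (intervalIntegrable_rpow_mul_sub_rpow (p := α * (n + 1)) (q := 1 - α)
      (by positivity) (by linarith) ht).const_mul (c ^ (n + 1) / Gamma (α * (n + 1)))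
    refine hbeta.congr fun x _ => ?_
    simp only [mittagLefflerTermDeriv_succ c hα0, sub_sub_cancel_left]
    ring

theorem integral_rpow_neg_mul_mittagLefflerTermDeriv_succ (hα0 : 0 < α) (hα1 : α < 1)
    (n : ℕ) {t : ℝ} (ht : 0 < t) :
    ∫ x in (0 : ℝ)..t, (t - x) ^ (-α) * mittagLefflerTermDeriv α c (n + 1) x
      = c * Gamma (1 - α) * mittagLefflerTerm α c n t := by
  have hbeta := integral_rpow_mul_sub_rpow (p := α * (n + 1)) (q := 1 - α)
    (by positivity) (by linarith) ht
  rw [show α * (n + 1) + (1 - α) = α * n + 1 by ring, add_sub_cancel_right, sub_sub_cancel_left]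
    at hbeta
  have hG : Gamma (α * (n + 1)) ≠ 0 := (Gamma_pos_of_pos (by positivity)).ne'
  simp only [mittagLefflerTermDeriv_succ c hα0]
  rw [intervalIntegral.integral_congr (g := fun x => c ^ (n + 1) / Gamma (α * (n + 1)) *
      (x ^ (α * (n + 1) - 1) * (t - x) ^ (-α))) (fun x _ => by ring),
    intervalIntegral.integral_const_mul, hbeta, mittagLefflerTerm]
  field_simp
  ring

theorem integral_rpow_neg_mul_tsum_mittagLefflerTermDeriv (hα0 : 0 < α) (hα1 : α < 1)
    {t : ℝ} (ht : 0 < t) :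
    ∫ x in (0 : ℝ)..t, (t - x) ^ (-α) * ∑' n, mittagLefflerTermDeriv α c n x
      = c * Gamma (1 - α) * ∑' n, mittagLefflerTerm α c n t := by
  set F : ℕ → ℝ → ℝ := fun n x => (t - x) ^ (-α) * mittagLefflerTermDeriv α c n x
  have hint : ∀ n, Integrable (F n) (volume.restrict (Ioc 0 t)) := fun n =>
    (intervalIntegrable_rpow_neg_mul_mittagLefflerTermDeriv c hα0 hα1 n ht).1
  have hnorm : ∀ n, ∫ x in Ioc 0 t, ‖F n x‖
      = ∫ x in (0 : ℝ)..t, (t - x) ^ (-α) * mittagLefflerTermDeriv α |c| n x := by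
    intro n
    rw [intervalIntegral.integral_of_le ht.le]
    refine setIntegral_congr_fun measurableSet_Ioc fun x hx => ?_
    rw [norm_mul, Real.norm_eq_abs, Real.norm_eq_abs, abs_mittagLefflerTermDeriv c hα0.le n hx.1.le,
      abs_of_nonneg (rpow_nonneg (sub_nonneg.2 hx.2) _)]
  have hsummable : Summable fun n => ∫ x in Ioc 0 t, ‖F n x‖ := by
    rw [← summable_nat_add_iff 1]
    simp only [hnorm, integral_rpow_neg_mul_mittagLefflerTermDeriv_succ |c| hα0 hα1 _ ht]
    exact (summable_mittagLefflerTerm |c| hα0 hα1 ht.le).mul_left _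
  have hsum := (hasSum_nat_add_iff' 1).2 (hasSum_integral_of_summable_integral_norm hint hsummable)
  simp only [F, Finset.range_one, Finset.sum_singleton, mittagLefflerTermDeriv_zero, Pi.zero_apply,
    mul_zero, intervalIntegral.integral_zero, sub_zero, ← intervalIntegral.integral_of_le ht.le,
    integral_rpow_neg_mul_mittagLefflerTermDeriv_succ c hα0 hα1 _ ht, tsum_mul_left] at hsum
  rw [← tsum_mul_left, hsum.tsum_eq]

end MittagLeffler

theorem stmt12_general (α lam : ℝ) (hα0 : 0 < α) (hα1 : α < 1)
    (Q : ℝ → ℝ)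
    (hQ : ∀ t, Q t = ∑' n : ℕ, (-lam * t ^ α) ^ n / Real.Gamma (α * n + 1)) :
    Q 0 = 1 ∧
    ∀ t > 0,
      (1 / Real.Gamma (1 - α)) *
          ∫ t' in (0:ℝ)..t, (t - t') ^ (-α) * deriv Q t' = -lam * Q t := by
  have hQ_eq : ∀ t, 0 ≤ t → Q t = ∑' n, mittagLefflerTerm α (-lam) n t := fun t ht => by
    simp only [hQ, pow_div_Gamma_eq_mittagLefflerTerm _ _ ht]
  refine ⟨?_, fun t ht => ?_⟩
  · rw [hQ, zero_rpow hα0.ne', mul_zero, tsum_eq_single 0 fun n hn => by simp [hn]]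
    simp
  have hderiv : ∀ x ∈ uIoc 0 t, deriv Q x = ∑' n, mittagLefflerTermDeriv α (-lam) n x := by
    intro x hx
    rw [uIoc_of_le ht.le] at hx
    refine ((hasDerivAt_tsum_mittagLefflerTerm (-lam) hα0 hα1 hx.1).congr_of_eventuallyEq ?_).deriv
    filter_upwards [Ioi_mem_nhds hx.1] with y hy using hQ_eq y (le_of_lt hy)
  rw [intervalIntegral.integral_congr_ae (.of_forall fun x hx => by rw [hderiv x hx]),
    integral_rpow_neg_mul_tsum_mittagLefflerTermDeriv (-lam) hα0 hα1 ht, ← hQ_eq t ht.le]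
  field_simp [(Gamma_pos_of_pos (sub_pos.2 hα1)).ne']

theorem stmt12 (α lam : ℝ) (hα0 : 0 < α) (hα1 : α < 1) (hlam : 0 < lam)
    (Q : ℝ → ℝ)
    (hQ : ∀ t, Q t = ∑' n : ℕ, (-lam * t ^ α) ^ n / Real.Gamma (α * n + 1)) :
    Q 0 = 1 ∧
    ∀ t > 0,
      (1 / Real.Gamma (1 - α)) *
          ∫ t' in (0:ℝ)..t, (t - t') ^ (-α) * deriv Q t' = -lam * Q t :=
  stmt12_general α lam hα0 hα1 Q hQ
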